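/- Suppose f is a transduction that is invariant under permutations, σ ∈ Σ is a letter, and u is a data word. If d, e are data values, neither of which is f-influencing in u, then d is f-memorable in u·(σ,d) if and only if e is f-memorable in u·(σ,e); moreover, for any data value δ ∉ {d,e}, δ is f-memorable in u·(σ,d) if and only if δ is f-memorable in u·(σ,e). -/

import Mathlib

namespace SSRT

/-- Elements of a factored output: either a retained output triple
(letter, data value, origin — integer origins allow shifting by `z`),
or one of the placeholder marks `(*,*,left)`, `(*,*,middle)`, `(*,*,right)`. -/
inductive FOElem (G D : Type) where
  | tri (g : G) (d : D) (o : ℤ)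
  | left
  | middle
  | right
  deriving DecidableEq

namespace FOElem

def isTri {G D : Type} : FOElem G D → Bool
  | .tri _ _ _ => true
  | _ => false

def isMark {G D : Type} (e : FOElem G D) : Bool := !e.isTri

end FOElem

/-- Data words over the input alphabet `A` with data from `D`. -/
abbrev DataWord (A D : Type) := List (A × D)

/-- Data words with origin information over the output alphabet `G`;
positions of the input are numbered 1,…,n. -/
abbrev OutWord (G D : Type) := List (G × D × ℕ)

/-- A transduction. -/
abbrev Transduction (A G D : Type) := DataWord A D → OutWord G D

variable {A G D : Type}

/-- Apply a permutation of data values to a data word. -/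
def permW (π : Equiv.Perm D) (u : DataWord A D) : DataWord A D :=
  u.map fun p => (p.1, π p.2)

/-- Apply a permutation of data values to an output word. -/
def permOut (π : Equiv.Perm D) (w : OutWord G D) : OutWord G D :=
  w.map fun t => (t.1, π t.2.1, t.2.2)

/-- Apply a permutation of data values to a factored output
(placeholder marks are unchanged). -/
def permFO (π : Equiv.Perm D) : List (FOElem G D) → List (FOElem G D) :=
  List.map fun e => match e with
    | .tri g d o => .tri g (π d) o
    | .left => .left
    | .middle => .middle
    | .right => .right

/-- Shift the origin of every retained triple by `z`. -/
def foShift (z : ℤ) : List (FOElem G D) → List (FOElem G D) :=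
  List.map fun e => match e with
    | .tri g d o => .tri g d (o + z)
    | .left => .left
    | .middle => .middle
    | .right => .right

/-- `f` is invariant under permutations. -/
def PermInvariant (f : Transduction A G D) : Prop :=
  ∀ (π : Equiv.Perm D) (u : DataWord A D), f (permW π u) = permOut π (f u)

/-- `f` is without data peeking: every data value output from origin `o`
already occurs in the input at some position `≤ o`. -/
def NoDataPeeking (f : Transduction A G D) : Prop :=
  ∀ (w : DataWord A D) (t : G × D × ℕ), t ∈ f w →
    ∃ (i : ℕ) (a : A), w[i]? = some (a, t.2.1) ∧ i + 1 ≤ t.2.2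

/-- `f` has linear blow up. -/
def LinearBlowUp (f : Transduction A G D) : Prop :=
  ∃ K : ℕ, ∀ (w : DataWord A D) (o : ℕ), 1 ≤ o → o ≤ w.length →
    ((f w).filter fun t => t.2.2 == o).length ≤ K

variable [DecidableEq G] [DecidableEq D]

/-- Merge consecutive occurrences of equal placeholder marks into one. -/
def collapse : List (FOElem G D) → List (FOElem G D)
  | [] => []
  | [a] => [a]
  | a :: b :: rest =>
      if a = b ∧ a.isMark then collapse (b :: rest)
      else a :: collapse (b :: rest)

/-- The factored output `f(u̲ ∣ v)`. -/
def leftFac (f : Transduction A G D) (u v : DataWord A D) : List (FOElem G D) :=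
  collapse ((f (u ++ v)).map fun t =>
    if t.2.2 ≤ u.length then FOElem.left else FOElem.tri t.1 t.2.1 (t.2.2 : ℤ))

/-- The factored output `f(u ∣ v̲)`. -/
def rightFac (f : Transduction A G D) (u v : DataWord A D) : List (FOElem G D) :=
  collapse ((f (u ++ v)).map fun t =>
    if u.length < t.2.2 then FOElem.right else FOElem.tri t.1 t.2.1 (t.2.2 : ℤ))

/-- The factored output `f(u̲ ∣ v ∣ w̲)`. -/
def threeFac (f : Transduction A G D) (u v w : DataWord A D) : List (FOElem G D) :=
  collapse ((f (u ++ v ++ w)).map fun t =>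
    if t.2.2 ≤ u.length then FOElem.left
    else if t.2.2 ≤ u.length + v.length then FOElem.tri t.1 t.2.1 (t.2.2 : ℤ)
    else FOElem.right)

/-- The factored output `f(u̲ ∣ v̲ ∣ w̲)`. -/
def allFac (f : Transduction A G D) (u v w : DataWord A D) : List (FOElem G D) :=
  collapse ((f (u ++ v ++ w)).map fun t =>
    if t.2.2 ≤ u.length then FOElem.left
    else if t.2.2 ≤ u.length + v.length then FOElem.middle
    else FOElem.right)

/-- `u[d/d']`: replace every occurrence of the data value `d` by `d'`. -/
def replaceD (u : DataWord A D) (d d' : D) : DataWord A D :=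
  u.map fun p => (p.1, if p.2 = d then d' else p.2)

/-- Isomorphism of data words: same length, same letters, and the same
equalities among the data values at the various positions. -/
def Iso (u u' : DataWord A D) : Prop :=
  u.length = u'.length ∧
  (∀ i : ℕ, u[i]?.map Prod.fst = u'[i]?.map Prod.fst) ∧
  (∀ i j : ℕ, (u[i]?.map Prod.snd = u[j]?.map Prod.snd) ↔
          (u'[i]?.map Prod.snd = u'[j]?.map Prod.snd))

/-- `d'` is a safe replacement for `d` in `u`. -/
def SafeRepl (d d' : D) (u : DataWord A D) : Prop := Iso (replaceD u d d') u

def OccursIn (d : D) (u : DataWord A D) : Prop := ∃ p ∈ u, p.2 = d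

/-- `d` is `f`-memorable in `u`. -/
def Memorable (f : Transduction A G D) (d : D) (u : DataWord A D) : Prop :=
  ∃ (v : DataWord A D) (d' : D), SafeRepl d d' u ∧
    leftFac f (replaceD u d d') v ≠ leftFac f u v

/-- `d` is `f`-vulnerable in `u`. -/
def Vulnerable (f : Transduction A G D) (d : D) (u : DataWord A D) : Prop :=
  ∃ (u' v : DataWord A D) (d' : D), ¬ OccursIn d u' ∧
    SafeRepl d d' (u ++ u' ++ v) ∧
    rightFac f (u ++ u') (replaceD v d d') ≠ rightFac f (u ++ u') v

/-- `d` is `f`-influencing in `u`. -/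
def Influencing (f : Transduction A G D) (d : D) (u : DataWord A D) : Prop :=
  Memorable f d u ∨ Vulnerable f d u

/-- The last occurrence of `d` in `u` is at (0-based) index `i`. -/
def IsLastOcc (u : DataWord A D) (d : D) (i : ℕ) : Prop :=
  (∃ a : A, u[i]? = some (a, d)) ∧ ∀ j : ℕ, i < j → ∀ p : A × D, u[j]? = some p → p.2 ≠ d

/-- `d` is fresher than `e` in `u`: the last occurrence of `d` in `u` is
strictly to the right of the last occurrence of `e`. -/
def Fresher (u : DataWord A D) (d e : D) : Prop :=
  ∃ i j : ℕ, IsLastOcc u d i ∧ IsLastOcc u e j ∧ j < i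

/-- `l` is the sequence of all `f`-influencing values of `u`, listed freshest
first: the `i`-th element (1-based) is the `i`-th `f`-influencing value of `u`.
(The paper writes this sequence in the reverse direction, as `d_m ⋯ d_1`.) -/
def IsIflSeq (f : Transduction A G D) (u : DataWord A D) (l : List D) : Prop :=
  (∀ d, d ∈ l ↔ Influencing f d u) ∧ l.Nodup ∧
  ∀ (i j : ℕ) (hi : i < l.length) (hj : j < l.length), i < j →
    Fresher u (l.get ⟨i, hi⟩) (l.get ⟨j, hj⟩)

/-- The type annotation of an influencing value. -/
inductive IflType where
  | vm | m | v
  deriving DecidableEq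

def HasIflType (f : Transduction A G D) (u : DataWord A D) (d : D) :
    IflType → Prop
  | .vm => Memorable f d u ∧ Vulnerable f d u
  | .m => Memorable f d u ∧ ¬ Vulnerable f d u
  | .v => Vulnerable f d u ∧ ¬ Memorable f d u

/-- `al` is `aifl_f(u)` (listed freshest first). -/
def IsAiflSeq (f : Transduction A G D) (u : DataWord A D)
    (al : List (D × IflType)) : Prop :=
  IsIflSeq f u (al.map Prod.fst) ∧ ∀ p ∈ al, HasIflType f u p.1 p.2

/-- The equivalence `u1 ≡_f u2`. -/
def FEquiv (f : Transduction A G D) (u1 u2 : DataWord A D) : Prop :=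
  ∃ π : Equiv.Perm D,
    (∀ v, foShift ((u1.length : ℤ) - (u2.length : ℤ))
        (leftFac f (permW π u2) v) = leftFac f u1 v) ∧
    (∀ al, IsAiflSeq f (permW π u2) al ↔ IsAiflSeq f u1 al) ∧
    (∀ u v1 v2, (rightFac f (u1 ++ u) v1 = rightFac f (u1 ++ u) v2) ↔
        (rightFac f (permW π u2 ++ u) v1 = rightFac f (permW π u2 ++ u) v2))

/-- `≡_f` has finitely many equivalence classes. -/
def FEquivFiniteIndex (f : Transduction A G D) : Prop :=
  ∃ S : Set (DataWord A D), S.Finite ∧ ∀ u, ∃ r ∈ S, FEquiv f r u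

/-- `E` is an equalizing scheme for `f` with associated sequence `δ 1, δ 2, ⋯`
(the value `δ 0` is irrelevant here): for every data word `u`, the `i`-th
`f`-influencing value of `E(u)(u)` is `δ i`. -/
def IsEqualizingSchemeWith (f : Transduction A G D)
    (E : DataWord A D → Equiv.Perm D) (δ : ℕ → D) : Prop :=
  ∀ (u : DataWord A D) (l : List D), IsIflSeq f (permW (E u) u) l →
    ∀ (i : ℕ) (h : i < l.length), l.get ⟨i, h⟩ = δ (i + 1)

def IsEqualizingScheme (f : Transduction A G D)
    (E : DataWord A D → Equiv.Perm D) : Prop :=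
  ∃ δ : ℕ → D, IsEqualizingSchemeWith f E δ

/-- `v1 ≡_f^E v2`. -/
def REquiv (f : Transduction A G D) (E : DataWord A D → Equiv.Perm D)
    (v1 v2 : DataWord A D) : Prop :=
  ∀ u, rightFac f (permW (E u) u) v1 = rightFac f (permW (E u) u) v2

/-- `≡_f^E` has finitely many equivalence classes. -/
def REquivFiniteIndex (f : Transduction A G D)
    (E : DataWord A D → Equiv.Perm D) : Prop :=
  ∃ S : Set (DataWord A D), S.Finite ∧ ∀ v, ∃ r ∈ S, REquiv f E r v

/-- The blocks of a factored output: the maximal infixes consisting of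
retained triples, in order. -/
def triBlocks (l : List (FOElem G D)) : List (List (FOElem G D)) :=
  (l.splitOnP fun e => !e.isTri).filter fun b => !b.isEmpty

/-- Helper for concretizing non-right blocks: walk `f(u̲ ∣ v̲ ∣ w̲)` and
substitute the `i`-th occurrence of the left mark by the `i`-th left block
(taken from `L`) and the `j`-th occurrence of the middle mark by the `j`-th
middle block (taken from `M`); right marks are turned into separators. -/
def annotateNR (L M : List (List (FOElem G D))) :
    List (FOElem G D) → ℕ → ℕ → List (Option (List (FOElem G D)))
  | [], _, _ => []
  | .left :: rest, i, j => some (L.getD i []) :: annotateNR L M rest (i + 1) j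
  | .middle :: rest, i, j => some (M.getD j []) :: annotateNR L M rest i (j + 1)
  | .right :: rest, i, j => none :: annotateNR L M rest i j
  | .tri g d o :: rest, i, j => some [.tri g d o] :: annotateNR L M rest i j

/-- The concretizations of the non-right blocks of `f(u̲ ∣ v̲ ∣ w̲)`, in order:
the concretization of a non-right block is the concatenation of the
concretizations of the left blocks (taken from `f(u ∣ v·w̲)`) and the middle
blocks (taken from `f(u̲ ∣ v ∣ w̲)`) occurring in it. -/
def concretizedNRBlocks (f : Transduction A G D) (u v w : DataWord A D) :
    List (List (FOElem G D)) :=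
  (((annotateNR (triBlocks (rightFac f u (v ++ w))) (triBlocks (threeFac f u v w))
        (allFac f u v w) 0 0).splitOnP fun o => o.isNone).filter
      fun grp => !grp.isEmpty).map fun grp => grp.reduceOption.flatten

/-- `π` tracks influencing values (relative to the sequence `δ`) on `w`:
the `i`-th `f`-influencing value of `w` is `π (δ i)`. -/
def TracksInfluencing (f : Transduction A G D) (δ : ℕ → D) (π : Equiv.Perm D)
    (w : DataWord A D) : Prop :=
  ∀ l, IsIflSeq f w l → ∀ (i : ℕ) (h : i < l.length), l.get ⟨i, h⟩ = π (δ (i + 1))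

end SSRT

namespace SSRT

set_option linter.unusedSectionVars false

variable {A G D : Type} [DecidableEq G] [DecidableEq D]

/-! ### Basic permutation lemmas -/

/-- The element-wise action underlying `permFO`. -/
def permFOf (π : Equiv.Perm D) : FOElem G D → FOElem G D
  | .tri g d o => .tri g (π d) o
  | .left => .left
  | .middle => .middle
  | .right => .right

lemma permFO_eq_map (π : Equiv.Perm D) (l : List (FOElem G D)) :
    permFO π l = l.map (permFOf π) := by
  unfold permFO permFOf
  rfl

lemma permFOf_inj (π : Equiv.Perm D) {a b : FOElem G D} :
    permFOf π a = permFOf π b ↔ a = b := by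
  cases a <;> cases b <;> simp [permFOf]

lemma permFOf_isMark (π : Equiv.Perm D) (a : FOElem G D) :
    (permFOf π a).isMark = a.isMark := by
  cases a <;> rfl

lemma permFO_permFO (π τ : Equiv.Perm D) (l : List (FOElem G D)) :
    permFO π (permFO τ l) = permFO (τ.trans π) l := by
  simp only [permFO_eq_map, List.map_map]
  apply List.map_congr_left
  rintro (⟨g, d, o⟩ | _ | _ | _) _ <;> rfl

lemma permFO_refl (l : List (FOElem G D)) : permFO (Equiv.refl D) l = l := by
  rw [permFO_eq_map]
  conv_rhs => rw [← List.map_id l]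
  apply List.map_congr_left
  rintro (⟨g, d, o⟩ | _ | _ | _) _ <;> rfl

lemma permFO_inj (π : Equiv.Perm D) {l1 l2 : List (FOElem G D)}
    (h : permFO π l1 = permFO π l2) : l1 = l2 := by
  have := congrArg (permFO (G := G) π.symm) h
  rwa [permFO_permFO, permFO_permFO, Equiv.self_trans_symm, permFO_refl, permFO_refl] at this

lemma permW_append (π : Equiv.Perm D) (a b : DataWord A D) :
    permW π (a ++ b) = permW π a ++ permW π b :=
  List.map_append

lemma permW_permW (π τ : Equiv.Perm D) (w : DataWord A D) :
    permW π (permW τ w) = permW (τ.trans π) w := by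
  simp only [permW, List.map_map]
  rfl

lemma permW_refl (w : DataWord A D) : permW (Equiv.refl D) w = w := by
  simp [permW]

lemma permW_symm_permW (π : Equiv.Perm D) (w : DataWord A D) :
    permW π.symm (permW π w) = w := by
  rw [permW_permW, Equiv.self_trans_symm, permW_refl]

lemma permW_permW_symm (π : Equiv.Perm D) (w : DataWord A D) :
    permW π (permW π.symm w) = w := by
  rw [permW_permW, Equiv.symm_trans_self, permW_refl]

lemma length_permW (π : Equiv.Perm D) (w : DataWord A D) :
    (permW π w).length = w.length :=
  List.length_map _

lemma length_replaceD (w : DataWord A D) (d c : D) :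
    (replaceD w d c).length = w.length :=
  List.length_map _

lemma occursIn_permW {π : Equiv.Perm D} {y : D} {w : DataWord A D} :
    OccursIn y (permW π w) ↔ OccursIn (π.symm y) w := by
  constructor
  · rintro ⟨p, hp, hpy⟩
    rw [permW, List.mem_map] at hp
    obtain ⟨q, hq, rfl⟩ := hp
    exact ⟨q, hq, by rw [← hpy, Equiv.symm_apply_apply]⟩
  · rintro ⟨q, hq, hqy⟩
    exact ⟨(q.1, π q.2), List.mem_map.mpr ⟨q, hq, rfl⟩, by simp [hqy]⟩

lemma replaceD_self (w : DataWord A D) (d : D) : replaceD w d d = w := by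
  unfold replaceD
  conv_rhs => rw [← List.map_id w]
  apply List.map_congr_left
  rintro ⟨x, y⟩ _
  by_cases hpd : y = d <;> simp [hpd]

lemma replaceD_of_not_occurs {w : DataWord A D} {d : D} (h : ¬ OccursIn d w) (c : D) :
    replaceD w d c = w := by
  unfold replaceD
  conv_rhs => rw [← List.map_id w]
  apply List.map_congr_left
  intro p hp
  have : p.2 ≠ d := fun e => h ⟨p, hp, e⟩
  simp [this]

lemma permW_swap_eq_replaceD {w : DataWord A D} {d c : D} (hc : ¬ OccursIn c w) :
    permW (Equiv.swap d c) w = replaceD w d c := by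
  unfold permW replaceD
  apply List.map_congr_left
  intro p hp
  have hpc : p.2 ≠ c := fun e => hc ⟨p, hp, e⟩
  by_cases hpd : p.2 = d
  · simp [hpd, Equiv.swap_apply_left]
  · simp [hpd, Equiv.swap_apply_of_ne_of_ne hpd hpc]

/-! ### collapse lemmas -/

lemma collapse_cons_cons (a b : FOElem G D) (l : List (FOElem G D)) :
    collapse (a :: b :: l) =
      if a = b ∧ a.isMark then collapse (b :: l) else a :: collapse (b :: l) := by
  rw [collapse]

lemma collapse_cons_map_collapse (h : FOElem G D → FOElem G D)
    (hm : ∀ e : FOElem G D, e.isMark → (h e).isMark) :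
    ∀ (l : List (FOElem G D)) (x : FOElem G D),
      collapse (x :: (collapse l).map h) = collapse (x :: l.map h)
  | [], x => rfl
  | [a], x => rfl
  | a :: b :: rest, x => by
    by_cases hab : a = b ∧ a.isMark
    · have h1 : collapse (a :: b :: rest) = collapse (b :: rest) := by
        rw [collapse_cons_cons, if_pos hab]
      rw [h1, collapse_cons_map_collapse h hm (b :: rest) x]
      obtain ⟨rfl, hmark⟩ := hab
      have hham : (h a).isMark := hm a hmark
      have inner : collapse (h a :: h a :: rest.map h) = collapse (h a :: rest.map h) := by
        rw [collapse_cons_cons, if_pos ⟨rfl, hham⟩]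
      simp only [List.map_cons]
      rw [collapse_cons_cons x (h a) (h a :: rest.map h), inner,
          collapse_cons_cons x (h a) (rest.map h)]
    · have h1 : collapse (a :: b :: rest) = a :: collapse (b :: rest) := by
        rw [collapse_cons_cons, if_neg hab]
      rw [h1]
      simp only [List.map_cons]
      rw [collapse_cons_cons x (h a) ((collapse (b :: rest)).map h),
          collapse_cons_cons x (h a) (h b :: rest.map h),
          collapse_cons_map_collapse h hm (b :: rest) (h a)]
      simp only [List.map_cons]

lemma collapse_map_collapse (h : FOElem G D → FOElem G D)
    (hm : ∀ e : FOElem G D, e.isMark → (h e).isMark) :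
    ∀ l : List (FOElem G D), collapse ((collapse l).map h) = collapse (l.map h)
  | [] => rfl
  | [a] => rfl
  | a :: b :: rest => by
    by_cases hab : a = b ∧ a.isMark
    · have h1 : collapse (a :: b :: rest) = collapse (b :: rest) := by
        rw [collapse_cons_cons, if_pos hab]
      rw [h1, collapse_map_collapse h hm (b :: rest)]
      obtain ⟨rfl, hmark⟩ := hab
      have hham : (h a).isMark := hm a hmark
      simp only [List.map_cons]
      rw [collapse_cons_cons (h a) (h a) (rest.map h), if_pos ⟨rfl, hham⟩]
      
    · have h1 : collapse (a :: b :: rest) = a :: collapse (b :: rest) := by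
        rw [collapse_cons_cons, if_neg hab]
      rw [h1]
      simp only [List.map_cons]
      rw [collapse_cons_map_collapse h hm (b :: rest) (h a)]
      simp only [List.map_cons]

lemma collapse_permFO (π : Equiv.Perm D) :
    ∀ l : List (FOElem G D), collapse (permFO π l) = permFO π (collapse l)
  | [] => rfl
  | [a] => by cases a <;> rfl
  | a :: b :: rest => by
    have hcond : (permFOf π a = permFOf π b ∧ (permFOf π a).isMark) ↔ (a = b ∧ a.isMark) := by
      rw [permFOf_inj, permFOf_isMark]
    simp only [permFO_eq_map, List.map_cons] at *
    rw [collapse_cons_cons, collapse_cons_cons a b rest]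
    by_cases hab : a = b ∧ a.isMark
    · rw [if_pos (hcond.mpr hab), if_pos hab, ← List.map_cons]
      have := collapse_permFO π (b :: rest)
      simpa only [permFO_eq_map, List.map_cons] using this
    · rw [if_neg (fun hh => hab (hcond.mp hh)), if_neg hab]
      have := collapse_permFO π (b :: rest)
      simp only [permFO_eq_map, List.map_cons] at this
      rw [this, List.map_cons]

/-! ### Equivariance of leftFac -/

lemma leftFac_perm (f : Transduction A G D) (hperm : PermInvariant f)
    (π : Equiv.Perm D) (a b : DataWord A D) :
    leftFac f (permW π a) (permW π b) = permFO π (leftFac f a b) := by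
  unfold leftFac
  rw [← permW_append, hperm, ← collapse_permFO]
  congr 1
  simp only [permOut, permFO_eq_map, List.map_map, length_permW]
  apply List.map_congr_left
  intro t _
  simp only [Function.comp]
  by_cases h : t.2.2 ≤ a.length <;> simp [h, permFOf]

/-! ### Refinement of factored outputs -/

def cutoff (N : ℕ) : FOElem G D → FOElem G D
  | .tri g x o => if o ≤ (N : ℤ) then .left else .tri g x o
  | .left => .left
  | .middle => .middle
  | .right => .right

lemma cutoff_isMark (N : ℕ) : ∀ e : FOElem G D, e.isMark → (cutoff N e).isMark := by
  rintro (⟨g, x, o⟩ | _ | _ | _) h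
  · simp [FOElem.isMark, FOElem.isTri] at h
  all_goals exact h

lemma leftFac_append (f : Transduction A G D) (a s v : DataWord A D) :
    leftFac f (a ++ s) v =
      collapse ((leftFac f a (s ++ v)).map (cutoff (a.length + s.length))) := by
  unfold leftFac
  rw [collapse_map_collapse _ (cutoff_isMark _), List.append_assoc]
  congr 1
  simp only [List.map_map]
  apply List.map_congr_left
  intro t _
  simp only [Function.comp]
  by_cases h1 : t.2.2 ≤ a.length
  · rw [if_pos h1, if_pos (show t.2.2 ≤ (a ++ s).length by
      simp only [List.length_append]; omega)]
    rfl
  · rw [if_neg h1]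
    have hc : cutoff (a.length + s.length) (FOElem.tri t.1 t.2.1 (t.2.2 : ℤ)) =
        if (t.2.2 : ℤ) ≤ ((a.length + s.length : ℕ) : ℤ) then FOElem.left
        else FOElem.tri t.1 t.2.1 (t.2.2 : ℤ) := rfl
    rw [hc]
    by_cases h3 : t.2.2 ≤ a.length + s.length
    · rw [if_pos (show t.2.2 ≤ (a ++ s).length by
        simp only [List.length_append]; omega),
        if_pos (show (t.2.2 : ℤ) ≤ ((a.length + s.length : ℕ) : ℤ) by exact_mod_cast h3)]
    · rw [if_neg (show ¬ t.2.2 ≤ (a ++ s).length by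
        simp only [List.length_append]; omega),
        if_neg (show ¬ (t.2.2 : ℤ) ≤ ((a.length + s.length : ℕ) : ℤ) by exact_mod_cast h3)]

lemma leftFac_prefix_congr (f : Transduction A G D) {a a' : DataWord A D}
    (hlen : a'.length = a.length)
    (H : ∀ w, leftFac f a' w = leftFac f a w) (s v : DataWord A D) :
    leftFac f (a' ++ s) v = leftFac f (a ++ s) v := by
  rw [leftFac_append, leftFac_append, H, hlen]

lemma not_memorable_leftFac {f : Transduction A G D} {d : D} {a : DataWord A D}
    (hd : ¬ Memorable f d a) {c : D} (hc : SafeRepl d c a) (v : DataWord A D) :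
    leftFac f (replaceD a d c) v = leftFac f a v := by
  by_contra h
  exact hd ⟨v, c, hc, h⟩

/-! ### SafeRepl and Iso lemmas -/

lemma mem_of_getElem?' {α : Type} {l : List α} {i : ℕ} {p : α} (h : l[i]? = some p) :
    p ∈ l := by
  obtain ⟨hlt, e⟩ := List.getElem?_eq_some_iff.mp h
  exact e ▸ List.getElem_mem hlt

lemma exists_getElem?_of_mem {α : Type} {l : List α} {p : α} (h : p ∈ l) :
    ∃ i : ℕ, l[i]? = some p := by
  obtain ⟨i, hi, e⟩ := List.mem_iff_getElem.mp h
  exact ⟨i, by rw [List.getElem?_eq_getElem hi, e]⟩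

lemma getElem?_replaceD (w : DataWord A D) (d c : D) (i : ℕ) :
    (replaceD w d c)[i]? = w[i]?.map fun p => (p.1, if p.2 = d then c else p.2) :=
  List.getElem?_map

lemma getElem?_permW (π : Equiv.Perm D) (w : DataWord A D) (i : ℕ) :
    (permW π w)[i]? = w[i]?.map fun p => (p.1, π p.2) :=
  List.getElem?_map

lemma safeRepl_of_not_occurs {c : D} {a : DataWord A D} (hc : ¬ OccursIn c a) (d : D) :
    SafeRepl d c a := by
  refine ⟨length_replaceD a d c, fun i => ?_, fun i j => ?_⟩
  · rw [getElem?_replaceD]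
    cases a[i]? <;> rfl
  · rw [getElem?_replaceD, getElem?_replaceD]
    rcases hi : a[i]? with _ | p <;> rcases hj : a[j]? with _ | q <;> simp
    have hp : p ∈ a := mem_of_getElem?' hi
    have hq : q ∈ a := mem_of_getElem?' hj
    have hpc : p.2 ≠ c := fun e => hc ⟨p, hp, e⟩
    have hqc : q.2 ≠ c := fun e => hc ⟨q, hq, e⟩
    constructor
    · intro h
      by_cases h1 : p.2 = d <;> by_cases h2 : q.2 = d <;>
        simp only [h1, h2, if_pos, if_neg, if_true, if_false, ite_true, ite_false] at h <;>
        first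
          | (exact h1.trans h2.symm)
          | (exact absurd h.symm hqc)
          | (exact absurd h hpc)
          | exact h
    · intro h; rw [h]
    
lemma not_occursIn_of_safeRepl {d x' : D} {w : DataWord A D}
    (hs : SafeRepl d x' w) (hocc : OccursIn d w) (hne : x' ≠ d) :
    ¬ OccursIn x' w := by
  rintro ⟨q, hq, hq2⟩
  obtain ⟨p, hp, hp2⟩ := hocc
  obtain ⟨i, hi⟩ := exists_getElem?_of_mem hp
  obtain ⟨j, hj⟩ := exists_getElem?_of_mem hq
  obtain ⟨-, -, h3⟩ := hs
  have hL : (replaceD w d x')[i]?.map Prod.snd = (replaceD w d x')[j]?.map Prod.snd := by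
    rw [getElem?_replaceD, getElem?_replaceD, hi, hj]
    simp [hp2, hq2, hne]
  have hR := (h3 i j).mp hL
  rw [hi, hj] at hR
  simp only [Option.map_some, hp2, hq2, Option.some.injEq] at hR
  exact hne hR.symm

lemma iso_permW (π : Equiv.Perm D) {a b : DataWord A D} :
    Iso (permW π a) (permW π b) ↔ Iso a b := by
  have hfst : ∀ (w : DataWord A D) (i : ℕ),
      ((permW π w)[i]?).map Prod.fst = (w[i]?).map Prod.fst := by
    intro w i; rw [getElem?_permW]; cases w[i]? <;> rfl
  have hsnd : ∀ (w : DataWord A D) (i : ℕ),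
      ((permW π w)[i]?).map Prod.snd = Option.map π ((w[i]?).map Prod.snd) := by
    intro w i; rw [getElem?_permW]; cases w[i]? <;> rfl
  have hinj : ∀ x y : Option D, (Option.map π x = Option.map π y) ↔ x = y :=
    fun x y => ⟨fun h => Option.map_injective π.injective h, fun h => h ▸ rfl⟩
  unfold Iso
  simp only [length_permW, hfst, hsnd, hinj]

lemma replaceD_permW (π : Equiv.Perm D) (w : DataWord A D) (d : D) (x' : D) :
    replaceD (permW π w) (π d) x' = permW π (replaceD w d (π.symm x')) := by
  unfold replaceD permW
  simp only [List.map_map]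
  apply List.map_congr_left
  intro p _
  simp only [Function.comp]
  by_cases h : p.2 = d
  · simp [h, Equiv.apply_symm_apply]
  · have h2 : π p.2 ≠ π d := fun e => h (π.injective e)
    simp [h, h2]

/-! ### Memorability lemmas -/

lemma memorable_of_perm (f : Transduction A G D) (hperm : PermInvariant f)
    (π : Equiv.Perm D) {d : D} {w : DataWord A D}
    (hm : Memorable f (π d) (permW π w)) : Memorable f d w := by
  obtain ⟨v, x', hsafe, hne⟩ := hm
  refine ⟨permW π.symm v, π.symm x', ?_, ?_⟩
  · have hsafe' : Iso (replaceD (permW π w) (π d) x') (permW π w) := hsafe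
    rw [replaceD_permW] at hsafe'
    exact (iso_permW π).mp hsafe'
  · intro hEq
    apply hne
    have h2 := congrArg (permFO (G := G) π) hEq
    rw [← leftFac_perm f hperm π, ← leftFac_perm f hperm π, permW_permW_symm,
        ← replaceD_permW] at h2
    exact h2

lemma not_memorable_perm (f : Transduction A G D) (hperm : PermInvariant f)
    (π : Equiv.Perm D) {d : D} {w : DataWord A D} (h : ¬ Memorable f d w) :
    ¬ Memorable f (π d) (permW π w) :=
  fun hm => h (memorable_of_perm f hperm π hm)

lemma occursIn_of_memorable {f : Transduction A G D} {x : D} {w : DataWord A D}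
    (hm : Memorable f x w) : OccursIn x w := by
  by_contra h
  obtain ⟨v, x', _, hne⟩ := hm
  rw [replaceD_of_not_occurs h] at hne
  exact hne rfl

lemma occursIn_append {x : D} {a b : DataWord A D} :
    OccursIn x (a ++ b) ↔ OccursIn x a ∨ OccursIn x b := by
  constructor
  · rintro ⟨p, hp, h2⟩
    rcases List.mem_append.mp hp with h | h
    · exact Or.inl ⟨p, h, h2⟩
    · exact Or.inr ⟨p, h, h2⟩
  · rintro (⟨p, hp, h2⟩ | ⟨p, hp, h2⟩)
    · exact ⟨p, List.mem_append.mpr (Or.inl hp), h2⟩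
    · exact ⟨p, List.mem_append.mpr (Or.inr hp), h2⟩

lemma replaceD_append (a b : DataWord A D) (d c : D) :
    replaceD (a ++ b) d c = replaceD a d c ++ replaceD b d c :=
  List.map_append

lemma replaceD_singleton_ne (σ : A) {y d : D} (h : y ≠ d) (c : D) :
    replaceD [(σ, y)] d c = [(σ, y)] := by
  simp [replaceD, h]

lemma replaceD_singleton_eq (σ : A) (d c : D) :
    replaceD [(σ, d)] d c = [(σ, c)] := by
  simp [replaceD]

lemma permW_singleton (π : Equiv.Perm D) (σ : A) (y : D) :
    permW π [(σ, y)] = [(σ, π y)] := rfl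


/-! ### Fresh values and witness freshening -/

lemma exists_fresh [Infinite D] (w : DataWord A D) (S : Finset D) :
    ∃ c : D, ¬ OccursIn c w ∧ c ∉ S := by
  obtain ⟨c, hc⟩ := Infinite.exists_notMem_finset ((w.map Prod.snd).toFinset ∪ S)
  rw [Finset.mem_union] at hc
  push_neg at hc
  refine ⟨c, ?_, hc.2⟩
  rintro ⟨p, hp, rfl⟩
  exact hc.1 (List.mem_toFinset.mpr (List.mem_map.mpr ⟨p, hp, rfl⟩))

lemma memorable_fresh_witness [Infinite D] (f : Transduction A G D)
    (hperm : PermInvariant f) {x : D} {w : DataWord A D}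
    (hm : Memorable f x w) (hocc : OccursIn x w) (S : Finset D) :
    ∃ (v : DataWord A D) (x' : D), x' ∉ S ∧ ¬ OccursIn x' w ∧ SafeRepl x x' w ∧
      leftFac f (replaceD w x x') v ≠ leftFac f w v := by
  obtain ⟨v0, x0, hs0, hne0⟩ := hm
  have hx0x : x0 ≠ x := by
    rintro rfl
    rw [replaceD_self] at hne0
    exact hne0 rfl
  have hx0w : ¬ OccursIn x0 w := not_occursIn_of_safeRepl hs0 hocc hx0x
  obtain ⟨x', hx'w, hx'S⟩ := exists_fresh w (S ∪ {x0, x})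
  rw [Finset.mem_union] at hx'S
  push_neg at hx'S
  obtain ⟨hx'S1, hx'S2⟩ := hx'S
  have hx'x0 : x' ≠ x0 := fun h => hx'S2 (by simp [h])
  have hτw : permW (Equiv.swap x0 x') w = w := by
    unfold permW
    conv_rhs => rw [← List.map_id w]
    apply List.map_congr_left
    intro p hp
    have h1 : p.2 ≠ x0 := fun h => hx0w ⟨p, hp, h⟩
    have h2 : p.2 ≠ x' := fun h => hx'w ⟨p, hp, h⟩
    simp [Equiv.swap_apply_of_ne_of_ne h1 h2]
  have key : replaceD w x x' = permW (Equiv.swap x0 x') (replaceD w x x0) := by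
    unfold replaceD permW
    simp only [List.map_map]
    apply List.map_congr_left
    intro p hp
    simp only [Function.comp]
    by_cases h : p.2 = x
    · simp [h, Equiv.swap_apply_left]
    · have h1 : p.2 ≠ x0 := fun hh => hx0w ⟨p, hp, hh⟩
      have h2 : p.2 ≠ x' := fun hh => hx'w ⟨p, hp, hh⟩
      simp [h, Equiv.swap_apply_of_ne_of_ne h1 h2]
  refine ⟨permW (Equiv.swap x0 x') v0, x', hx'S1, hx'w,
    safeRepl_of_not_occurs hx'w x, ?_⟩
  rw [key]
  intro hEq
  apply hne0
  rw [leftFac_perm f hperm (Equiv.swap x0 x') (replaceD w x x0) v0] at hEq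
  have h2 : leftFac f w (permW (Equiv.swap x0 x') v0)
      = permFO (Equiv.swap x0 x') (leftFac f w v0) := by
    conv_lhs => rw [← hτw]
    exact leftFac_perm f hperm (Equiv.swap x0 x') w v0
  rw [h2] at hEq
  exact permFO_inj _ hEq

/-! ### The key exchange lemma -/

lemma star [Infinite D] (f : Transduction A G D) (hperm : PermInvariant f)
    {d e : D} (hde : d ≠ e) (σ : A) {a : DataWord A D}
    (Hd : ¬ Memorable f d a) (He : ¬ Memorable f e a) (v : DataWord A D) :
    leftFac f (a ++ [(σ, e)]) (permW (Equiv.swap d e) v) =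
      permFO (Equiv.swap d e) (leftFac f (a ++ [(σ, d)]) v) := by
  obtain ⟨c, hca, hcS⟩ := exists_fresh a ({d, e} : Finset D)
  have hcd : c ≠ d := fun h => hcS (by simp [h])
  have hce : c ≠ e := fun h => hcS (by simp [h])
  have hed : e ≠ d := hde.symm
  have ha1 : permW (Equiv.swap d c) a = replaceD a d c := permW_swap_eq_replaceD hca
  have hE1 : ∀ s w, leftFac f (replaceD a d c ++ s) w = leftFac f (a ++ s) w :=
    leftFac_prefix_congr f (length_replaceD a d c)
      (not_memorable_leftFac Hd (safeRepl_of_not_occurs hca d))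
  have hMem_e_a1 : ¬ Memorable f e (replaceD a d c) := by
    rw [← ha1]
    have h := not_memorable_perm f hperm (Equiv.swap d c) He
    rwa [Equiv.swap_apply_of_ne_of_ne hed (Ne.symm hce)] at h
  have hMem_c_a1 : ¬ Memorable f c (replaceD a d c) := by
    rw [← ha1]
    have h := not_memorable_perm f hperm (Equiv.swap d c) Hd
    rwa [Equiv.swap_apply_left] at h
  have hMem_d_a2 : ¬ Memorable f d (permW (Equiv.swap d e) (replaceD a d c)) := by
    have h := not_memorable_perm f hperm (Equiv.swap d e) hMem_e_a1
    rwa [Equiv.swap_apply_right] at h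
  have hocc_d_a1 : ¬ OccursIn d (replaceD a d c) := by
    rw [← ha1, occursIn_permW, Equiv.symm_swap, Equiv.swap_apply_left]
    exact hca
  have hocc_e_a2 : ¬ OccursIn e (permW (Equiv.swap d e) (replaceD a d c)) := by
    rw [occursIn_permW, Equiv.symm_swap, Equiv.swap_apply_right, ← ha1, occursIn_permW,
        Equiv.symm_swap, Equiv.swap_apply_left]
    exact hca
  have hrepl_a2 : replaceD (permW (Equiv.swap d e) (replaceD a d c)) d e
      = replaceD a d c := by
    rw [← permW_swap_eq_replaceD hocc_e_a2, permW_permW, Equiv.swap_swap, permW_refl]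
  have hE3 : ∀ s w, leftFac f (replaceD a d c ++ s) w
      = leftFac f (permW (Equiv.swap d e) (replaceD a d c) ++ s) w := by
    intro s w
    have h := leftFac_prefix_congr f (length_replaceD _ d e)
      (not_memorable_leftFac hMem_d_a2 (safeRepl_of_not_occurs hocc_e_a2 d)) s w
    rwa [hrepl_a2] at h
  have hrepl_a1 : replaceD (replaceD a d c) c d = a := by
    rw [← permW_swap_eq_replaceD hocc_d_a1, ← ha1, permW_permW, Equiv.swap_comm c d,
        Equiv.swap_swap, permW_refl]
  have hE4 : ∀ s w, leftFac f (a ++ s) w = leftFac f (replaceD a d c ++ s) w := by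
    intro s w
    have h := leftFac_prefix_congr f (length_replaceD _ c d)
      (not_memorable_leftFac hMem_c_a1 (safeRepl_of_not_occurs hocc_d_a1 c)) s w
    rwa [hrepl_a1] at h
  have hE2 : leftFac f (permW (Equiv.swap d e) (replaceD a d c) ++ [(σ, e)])
      (permW (Equiv.swap d e) v)
      = permFO (Equiv.swap d e) (leftFac f (replaceD a d c ++ [(σ, d)]) v) := by
    have h := leftFac_perm f hperm (Equiv.swap d e) (replaceD a d c ++ [(σ, d)]) v
    rwa [permW_append, permW_singleton, Equiv.swap_apply_left] at h
  calc leftFac f (a ++ [(σ, e)]) (permW (Equiv.swap d e) v)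
      = leftFac f (replaceD a d c ++ [(σ, e)]) (permW (Equiv.swap d e) v) := hE4 _ _
    _ = leftFac f (permW (Equiv.swap d e) (replaceD a d c) ++ [(σ, e)])
        (permW (Equiv.swap d e) v) := hE3 _ _
    _ = permFO (Equiv.swap d e) (leftFac f (replaceD a d c ++ [(σ, d)]) v) := hE2
    _ = permFO (Equiv.swap d e) (leftFac f (a ++ [(σ, d)]) v) := by rw [hE1]


/-! ### The two transfer directions -/

lemma dir2 [Infinite D] (f : Transduction A G D) (hperm : PermInvariant f)
    {d e δ : D} (hde : d ≠ e) (hδd : δ ≠ d) (hδe : δ ≠ e) (σ : A) (u : DataWord A D)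
    (Hd : ¬ Memorable f d u) (He : ¬ Memorable f e u)
    (hm : Memorable f δ (u ++ [(σ, d)])) : Memorable f δ (u ++ [(σ, e)]) := by
  have hocc : OccursIn δ (u ++ [(σ, d)]) := occursIn_of_memorable hm
  obtain ⟨v, x', hx'S, hx'w, hsafe, hne⟩ :=
    memorable_fresh_witness f hperm hm hocc ({d, e} : Finset D)
  have hx'u : ¬ OccursIn x' u := fun h => hx'w (occursIn_append.mpr (Or.inl h))
  have hx'd : x' ≠ d := fun h => hx'S (by simp [h])
  have hx'e : x' ≠ e := fun h => hx'S (by simp [h])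
  have hub : permW (Equiv.swap δ x') u = replaceD u δ x' := permW_swap_eq_replaceD hx'u
  have hMem_d_ub : ¬ Memorable f d (replaceD u δ x') := by
    rw [← hub]
    have h := not_memorable_perm f hperm (Equiv.swap δ x') Hd
    rwa [Equiv.swap_apply_of_ne_of_ne (Ne.symm hδd) (Ne.symm hx'd)] at h
  have hMem_e_ub : ¬ Memorable f e (replaceD u δ x') := by
    rw [← hub]
    have h := not_memorable_perm f hperm (Equiv.swap δ x') He
    rwa [Equiv.swap_apply_of_ne_of_ne (Ne.symm hδe) (Ne.symm hx'e)] at h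
  have hsplit : replaceD (u ++ [(σ, d)]) δ x' = replaceD u δ x' ++ [(σ, d)] := by
    rw [replaceD_append, replaceD_singleton_ne σ (Ne.symm hδd)]
  have hsplit2 : replaceD (u ++ [(σ, e)]) δ x' = replaceD u δ x' ++ [(σ, e)] := by
    rw [replaceD_append, replaceD_singleton_ne σ (Ne.symm hδe)]
  refine ⟨permW (Equiv.swap d e) v, x', safeRepl_of_not_occurs ?_ δ, ?_⟩
  · rw [occursIn_append]
    rintro (h | h)
    · exact hx'u h
    · obtain ⟨p, hp, h2⟩ := h
      rw [List.mem_singleton] at hp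
      subst hp
      exact hx'e h2.symm
  · rw [hsplit2, star f hperm hde σ hMem_d_ub hMem_e_ub v, star f hperm hde σ Hd He v]
    intro hEq
    apply hne
    rw [hsplit]
    exact permFO_inj _ hEq

lemma dir1 [Infinite D] (f : Transduction A G D) (hperm : PermInvariant f)
    {d e : D} (hde : d ≠ e) (σ : A) (u : DataWord A D)
    (Hd : ¬ Memorable f d u) (He : ¬ Memorable f e u)
    (hm : Memorable f d (u ++ [(σ, d)])) : Memorable f e (u ++ [(σ, e)]) := by
  have hocc : OccursIn d (u ++ [(σ, d)]) :=
    occursIn_append.mpr (Or.inr ⟨(σ, d), List.mem_singleton.mpr rfl, rfl⟩)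
  obtain ⟨v, x', hx'S, hx'w, hsafe, hne⟩ :=
    memorable_fresh_witness f hperm hm hocc ({d, e} : Finset D)
  have hx'u : ¬ OccursIn x' u := fun h => hx'w (occursIn_append.mpr (Or.inl h))
  have hx'd : x' ≠ d := fun h => hx'S (by simp [h])
  have hx'e : x' ≠ e := fun h => hx'S (by simp [h])
  have hed : e ≠ d := hde.symm
  obtain ⟨c, hcu, hcS⟩ := exists_fresh u ({d, e, x'} : Finset D)
  have hcd : c ≠ d := fun h => hcS (by simp [h])
  have hce : c ≠ e := fun h => hcS (by simp [h])
  have hcx' : c ≠ x' := fun h => hcS (by simp [h])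
  have hub : permW (Equiv.swap d x') u = replaceD u d x' := permW_swap_eq_replaceD hx'u
  -- pointwise evaluations of the composite permutations
  have hpp1d : ((Equiv.swap d x').trans (Equiv.swap d e)) d = x' := by
    simp only [Equiv.trans_apply]
    rw [Equiv.swap_apply_left, Equiv.swap_apply_of_ne_of_ne hx'd hx'e]
  have hpp1e : ((Equiv.swap d x').trans (Equiv.swap d e)) e = d := by
    simp only [Equiv.trans_apply]
    rw [Equiv.swap_apply_of_ne_of_ne hed (Ne.symm hx'e), Equiv.swap_apply_right]
  have hpp1sc : (Equiv.symm ((Equiv.swap d x').trans (Equiv.swap d e))) c = c := by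
    simp only [Equiv.symm_trans_apply, Equiv.symm_swap]
    rw [Equiv.swap_apply_of_ne_of_ne hcd hce, Equiv.swap_apply_of_ne_of_ne hcd hcx']
  have hpp2e : (((Equiv.swap d x').trans (Equiv.swap d e)).trans (Equiv.swap x' c)) e = d := by
    simp only [Equiv.trans_apply]
    rw [Equiv.swap_apply_of_ne_of_ne hed (Ne.symm hx'e), Equiv.swap_apply_right,
      Equiv.swap_apply_of_ne_of_ne (Ne.symm hx'd) (Ne.symm hcd)]
  have hpp2sx' : (Equiv.symm (((Equiv.swap d x').trans (Equiv.swap d e)).trans (Equiv.swap x' c))) x' = c := by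
    simp only [Equiv.symm_trans_apply, Equiv.symm_swap]
    rw [Equiv.swap_apply_left, Equiv.swap_apply_of_ne_of_ne hcd hce,
      Equiv.swap_apply_of_ne_of_ne hcd hcx']
  have hpp3d : ((((Equiv.swap d x').trans (Equiv.swap d e)).trans (Equiv.swap x' c)).trans (Equiv.swap d x')) d = c := by
    simp only [Equiv.trans_apply]
    rw [Equiv.swap_apply_left, Equiv.swap_apply_of_ne_of_ne hx'd hx'e,
      Equiv.swap_apply_left, Equiv.swap_apply_of_ne_of_ne hcd hcx']
  have hpp3sd : (Equiv.symm ((((Equiv.swap d x').trans (Equiv.swap d e)).trans (Equiv.swap x' c)).trans (Equiv.swap d x'))) d = c := by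
    simp only [Equiv.symm_trans_apply, Equiv.symm_swap]
    rw [Equiv.swap_apply_left, Equiv.swap_apply_left,
      Equiv.swap_apply_of_ne_of_ne hcd hce, Equiv.swap_apply_of_ne_of_ne hcd hcx']
  -- non-memorability transfers
  have hMem_x'_b : ¬ Memorable f x' (permW ((Equiv.swap d x').trans (Equiv.swap d e)) u) := by
    have h := not_memorable_perm f hperm ((Equiv.swap d x').trans (Equiv.swap d e)) Hd
    rwa [hpp1d] at h
  have hMem_d_b2 : ¬ Memorable f d (permW (((Equiv.swap d x').trans (Equiv.swap d e)).trans (Equiv.swap x' c)) u) := by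
    have h := not_memorable_perm f hperm (((Equiv.swap d x').trans (Equiv.swap d e)).trans (Equiv.swap x' c)) He
    rwa [hpp2e] at h
  have hMem_c_b3 : ¬ Memorable f c (permW ((((Equiv.swap d x').trans (Equiv.swap d e)).trans (Equiv.swap x' c)).trans (Equiv.swap d x')) u) := by
    have h := not_memorable_perm f hperm ((((Equiv.swap d x').trans (Equiv.swap d e)).trans (Equiv.swap x' c)).trans (Equiv.swap d x')) Hd
    rwa [hpp3d] at h
  -- freshness transfers
  have hocc_c_b : ¬ OccursIn c (permW ((Equiv.swap d x').trans (Equiv.swap d e)) u) := by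
    rw [occursIn_permW, hpp1sc]
    exact hcu
  have hocc_x'_b2 : ¬ OccursIn x' (permW (((Equiv.swap d x').trans (Equiv.swap d e)).trans (Equiv.swap x' c)) u) := by
    rw [occursIn_permW, hpp2sx']
    exact hcu
  have hocc_d_b3 : ¬ OccursIn d (permW ((((Equiv.swap d x').trans (Equiv.swap d e)).trans (Equiv.swap x' c)).trans (Equiv.swap d x')) u) := by
    rw [occursIn_permW, hpp3sd]
    exact hcu
  -- the chain of prefix replacements
  have hb2 : replaceD (permW ((Equiv.swap d x').trans (Equiv.swap d e)) u) x' c = permW (((Equiv.swap d x').trans (Equiv.swap d e)).trans (Equiv.swap x' c)) u := by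
    rw [← permW_swap_eq_replaceD hocc_c_b, permW_permW]
  have hb3 : replaceD (permW (((Equiv.swap d x').trans (Equiv.swap d e)).trans (Equiv.swap x' c)) u) d x' = permW ((((Equiv.swap d x').trans (Equiv.swap d e)).trans (Equiv.swap x' c)).trans (Equiv.swap d x')) u := by
    rw [← permW_swap_eq_replaceD hocc_x'_b2, permW_permW]
  have hb4 : replaceD (permW ((((Equiv.swap d x').trans (Equiv.swap d e)).trans (Equiv.swap x' c)).trans (Equiv.swap d x')) u) c d = permW (((((Equiv.swap d x').trans (Equiv.swap d e)).trans (Equiv.swap x' c)).trans (Equiv.swap d x')).trans (Equiv.swap c d)) u := by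
    rw [← permW_swap_eq_replaceD hocc_d_b3, permW_permW]
  have hCh1 : ∀ s w, leftFac f (permW (((Equiv.swap d x').trans (Equiv.swap d e)).trans (Equiv.swap x' c)) u ++ s) w = leftFac f (permW ((Equiv.swap d x').trans (Equiv.swap d e)) u ++ s) w := by
    intro s w
    have h := leftFac_prefix_congr f (length_replaceD (permW ((Equiv.swap d x').trans (Equiv.swap d e)) u) x' c)
      (not_memorable_leftFac hMem_x'_b (safeRepl_of_not_occurs hocc_c_b x')) s w
    rwa [hb2] at h
  have hCh2 : ∀ s w, leftFac f (permW ((((Equiv.swap d x').trans (Equiv.swap d e)).trans (Equiv.swap x' c)).trans (Equiv.swap d x')) u ++ s) w = leftFac f (permW (((Equiv.swap d x').trans (Equiv.swap d e)).trans (Equiv.swap x' c)) u ++ s) w := by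
    intro s w
    have h := leftFac_prefix_congr f (length_replaceD (permW (((Equiv.swap d x').trans (Equiv.swap d e)).trans (Equiv.swap x' c)) u) d x')
      (not_memorable_leftFac hMem_d_b2 (safeRepl_of_not_occurs hocc_x'_b2 d)) s w
    rwa [hb3] at h
  have hCh3 : ∀ s w, leftFac f (permW (((((Equiv.swap d x').trans (Equiv.swap d e)).trans (Equiv.swap x' c)).trans (Equiv.swap d x')).trans (Equiv.swap c d)) u ++ s) w = leftFac f (permW ((((Equiv.swap d x').trans (Equiv.swap d e)).trans (Equiv.swap x' c)).trans (Equiv.swap d x')) u ++ s) w := by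
    intro s w
    have h := leftFac_prefix_congr f (length_replaceD (permW ((((Equiv.swap d x').trans (Equiv.swap d e)).trans (Equiv.swap x' c)).trans (Equiv.swap d x')) u) c d)
      (not_memorable_leftFac hMem_c_b3 (safeRepl_of_not_occurs hocc_d_b3 c)) s w
    rwa [hb4] at h
  -- identification of the end of the chain
  have hb4' : permW (((((Equiv.swap d x').trans (Equiv.swap d e)).trans (Equiv.swap x' c)).trans (Equiv.swap d x')).trans (Equiv.swap c d)) u = replaceD u e x' := by
    unfold permW replaceD
    apply List.map_congr_left
    rintro ⟨g, y⟩ hp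
    have hyc : y ≠ c := fun h => hcu ⟨(g, y), hp, h⟩
    have hyx' : y ≠ x' := fun h => hx'u ⟨(g, y), hp, h⟩
    simp only [Equiv.trans_apply]
    by_cases h1 : y = d
    · subst h1
      rw [Equiv.swap_apply_left, Equiv.swap_apply_of_ne_of_ne hx'd hx'e,
        Equiv.swap_apply_left, Equiv.swap_apply_of_ne_of_ne hcd hcx', Equiv.swap_apply_left]
      simp [hde]
    · by_cases h2 : y = e
      · subst h2
        rw [Equiv.swap_apply_of_ne_of_ne hed (Ne.symm hx'e), Equiv.swap_apply_right,
          Equiv.swap_apply_of_ne_of_ne (Ne.symm hx'd) (Ne.symm hcd), Equiv.swap_apply_left,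
          Equiv.swap_apply_of_ne_of_ne (Ne.symm hcx') hx'd]
        simp
      · rw [Equiv.swap_apply_of_ne_of_ne h1 hyx', Equiv.swap_apply_of_ne_of_ne h1 h2,
          Equiv.swap_apply_of_ne_of_ne hyx' hyc, Equiv.swap_apply_of_ne_of_ne h1 hyx',
          Equiv.swap_apply_of_ne_of_ne hyc h1]
        simp [h2]
  have hCh : ∀ s w, leftFac f (replaceD u e x' ++ s) w = leftFac f (permW ((Equiv.swap d x').trans (Equiv.swap d e)) u ++ s) w := by
    intro s w
    rw [← hb4', hCh3, hCh2, hCh1]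
  -- splitting lemmas
  have hsplit : replaceD (u ++ [(σ, d)]) d x' = replaceD u d x' ++ [(σ, x')] := by
    rw [replaceD_append, replaceD_singleton_eq]
  have hsplit2 : replaceD (u ++ [(σ, e)]) e x' = replaceD u e x' ++ [(σ, x')] := by
    rw [replaceD_append, replaceD_singleton_eq]
  -- equivariance
  have hequiv : leftFac f (permW ((Equiv.swap d x').trans (Equiv.swap d e)) u ++ [(σ, x')]) (permW (Equiv.swap d e) v)
      = permFO (Equiv.swap d e) (leftFac f (replaceD u d x' ++ [(σ, x')]) v) := by
    have h := leftFac_perm f hperm (Equiv.swap d e) (replaceD u d x' ++ [(σ, x')]) v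
    rwa [permW_append, permW_singleton,
      show (Equiv.swap d e) x' = x' from Equiv.swap_apply_of_ne_of_ne hx'd hx'e,
      ← hub, permW_permW, hub] at h
  refine ⟨permW (Equiv.swap d e) v, x', safeRepl_of_not_occurs ?_ e, ?_⟩
  · rw [occursIn_append]
    rintro (h | h)
    · exact hx'u h
    · obtain ⟨p, hp, h2⟩ := h
      rw [List.mem_singleton] at hp
      subst hp
      exact hx'e h2.symm
  · rw [hsplit2, hCh, hequiv, star f hperm hde σ Hd He v]
    intro hEq
    apply hne
    rw [hsplit]
    exact permFO_inj _ hEq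


end SSRT


open SSRT

/-- Lemma 37. -/
theorem all_new_values_memorable
    {D A G : Type} [DecidableEq D] [Infinite D] [DecidableEq G]
    [Fintype A] [Fintype G]
    (f : Transduction A G D) (hperm : PermInvariant f)
    (σ : A) (u : DataWord A D) (d e : D)
    (hd : ¬ Influencing f d u) (he : ¬ Influencing f e u) :
    (Memorable f d (u ++ [(σ, d)]) ↔ Memorable f e (u ++ [(σ, e)])) ∧
    (∀ δ : D, δ ≠ d → δ ≠ e →
      (Memorable f δ (u ++ [(σ, d)]) ↔ Memorable f δ (u ++ [(σ, e)]))) := by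
  by_cases hde : d = e
  · subst hde
    exact ⟨Iff.rfl, fun δ _ _ => Iff.rfl⟩
  · have Hd : ¬ Memorable f d u := fun m => hd (Or.inl m)
    have He : ¬ Memorable f e u := fun m => he (Or.inl m)
    exact ⟨⟨dir1 f hperm hde σ u Hd He, dir1 f hperm (Ne.symm hde) σ u He Hd⟩,
      fun δ h1 h2 => ⟨dir2 f hperm hde h1 h2 σ u Hd He,
        dir2 f hperm (Ne.symm hde) h2 h1 σ u He Hd⟩⟩
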